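/- Let θ ≥ 0, 0 < q < ∞ and C > 0. Let σ = (σ_s)_{s∈𝓕} be a family of real numbers with σ_s > 1 for every s ∈ 𝓕, and assume that Σ_{s∈𝓕} p_s(θ+2) σ_s^{-q} ≤ C. For s ∈ 𝓕 let E_s := {e ∈ 𝓕 : e_j ∈ {0,1} for all j, and e_j = 0 whenever s_j = 0}. Then for every ξ > 1, Σ_{s∈Λ(ξ)} p_s(θ) · Σ_{e∈E_s} ∏_{j : s_j > 0} (s_j − e_j + 1) ≤ C ξ. In particular (θ = 0, so that the left-hand side is the cardinality |G(ξ)| of the index set G(ξ) = {(s,e,k) : s ∈ Λ(ξ), e ∈ E_s, k ∈ π_{s−e}} with |π_{s−e}| = ∏_j (s_j − e_j + 1)), if Σ_{s∈𝓕} p_s(2) σ_s^{-q} ≤ C then |G(ξ)| ≤ C ξ for every ξ > 1. -/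
import Mathlib

/-- `p_s(θ) = ∏_j (1 + s_j)^θ`, a finite product since `s` is finitely supported. -/
noncomputable def pFun (θ : ℝ) (s : ℕ →₀ ℕ) : ℝ :=
  ∏ j ∈ s.support, ((1 : ℝ) + s j) ^ θ

/-- The set `E_s = {e ∈ 𝓕 : e_j ∈ {0,1}, e_j = 0 if s_j = 0}`, realized as the
finset `Iic t` where `t j = min 1 (s j)`. -/
noncomputable def Efin (s : ℕ →₀ ℕ) : Finset (ℕ →₀ ℕ) :=
  Finset.Iic (Finsupp.mapRange (fun n => min 1 n) (by simp) s)

lemma pFun_nonneg (θ : ℝ) (s : ℕ →₀ ℕ) : 0 ≤ pFun θ s :=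
  Finset.prod_nonneg fun j _ => Real.rpow_nonneg (by positivity) θ

lemma inner_nonneg (s : ℕ →₀ ℕ) :
    0 ≤ ∑ e ∈ Efin s, ∏ j ∈ s.support, ((s j - e j + 1 : ℕ) : ℝ) :=
  Finset.sum_nonneg fun e _ => Finset.prod_nonneg fun j _ => by positivity

lemma inner_le (s : ℕ →₀ ℕ) :
    ∑ e ∈ Efin s, ∏ j ∈ s.support, ((s j - e j + 1 : ℕ) : ℝ) ≤
      ∏ j ∈ s.support, ((1 : ℝ) + s j) ^ 2 := by
  set t := Finsupp.mapRange (fun n => min 1 n) (by simp) s with ht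
  have hsupp : t.support = s.support := by
    ext j
    simp [ht, Finsupp.mem_support_iff, Nat.min_eq_zero_iff]
  have hcard : (Efin s).card = 2 ^ s.support.card := by
    rw [Efin, Finsupp.card_Iic, hsupp]
    rw [Finset.prod_congr rfl (fun j hj => ?_), Finset.prod_const]
    have : s j ≠ 0 := Finsupp.mem_support_iff.mp hj
    have : t j = 1 := by simp [ht, Nat.min_eq_left, Nat.one_le_iff_ne_zero.mpr this]
    rw [this]
    simp
  calc ∑ e ∈ Efin s, ∏ j ∈ s.support, ((s j - e j + 1 : ℕ) : ℝ)
      ≤ ∑ _e ∈ Efin s, ∏ j ∈ s.support, ((s j + 1 : ℕ) : ℝ) := by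
        refine Finset.sum_le_sum fun e _ => Finset.prod_le_prod
          (fun j _ => by positivity) (fun j _ => ?_)
        exact_mod_cast Nat.add_le_add_right (Nat.sub_le _ _) 1
    _ = (2 : ℝ) ^ s.support.card * ∏ j ∈ s.support, ((s j + 1 : ℕ) : ℝ) := by
        rw [Finset.sum_const, hcard, nsmul_eq_mul]; push_cast; ring
    _ = ∏ j ∈ s.support, (2 * ((s j : ℝ) + 1)) := by
        rw [Finset.prod_mul_distrib, Finset.prod_const]; push_cast; ring
    _ ≤ ∏ j ∈ s.support, ((1 : ℝ) + s j) ^ 2 := by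
        refine Finset.prod_le_prod (fun j _ => by positivity) (fun j hj => ?_)
        have h1 : (1 : ℝ) ≤ s j := by
          exact_mod_cast Nat.one_le_iff_ne_zero.mpr (Finsupp.mem_support_iff.mp hj)
        nlinarith

lemma term_le (θ : ℝ) (hθ : 0 ≤ θ) (s : ℕ →₀ ℕ) :
    pFun θ s * ∑ e ∈ Efin s, ∏ j ∈ s.support, ((s j - e j + 1 : ℕ) : ℝ) ≤
      pFun (θ + 2) s := by
  have h : pFun (θ + 2) s = pFun θ s * ∏ j ∈ s.support, ((1 : ℝ) + s j) ^ 2 := by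
    rw [pFun, pFun, ← Finset.prod_mul_distrib]
    refine Finset.prod_congr rfl fun j _ => ?_
    have hp : (0 : ℝ) < 1 + s j := by positivity
    rw [Real.rpow_add hp]
    norm_num [Real.rpow_two]
  rw [h]
  exact mul_le_mul_of_nonneg_left (inner_le s) (pFun_nonneg θ s)

/-- Lemma A.2: if `∑_{s∈𝓕} p_s(θ+2) σ_s^{-q} ≤ C` then for every
`ξ > 1`, `∑_{s∈Λ(ξ)} p_s(θ) ∑_{e∈E_s} ∏_{j : s_j > 0} (s_j - e_j + 1) ≤ C ξ`
(the case `θ = 0` gives the cardinality bound `|G(ξ)| ≤ C ξ`). -/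
theorem stmt_6 (θ q C : ℝ) (hθ : 0 ≤ θ) (hq : 0 < q) (hC : 0 < C)
    (σ : (ℕ →₀ ℕ) → ℝ) (hσ : ∀ s, 1 < σ s)
    (hsum : Summable fun s => pFun (θ + 2) s * σ s ^ (-q))
    (hle : ∑' s, pFun (θ + 2) s * σ s ^ (-q) ≤ C) :
    ∀ ξ : ℝ, 1 < ξ →
      Summable (fun s : {s : ℕ →₀ ℕ // σ s ^ q ≤ ξ} =>
        pFun θ s.1 * ∑ e ∈ Efin s.1,
          ∏ j ∈ s.1.support, ((s.1 j - e j + 1 : ℕ) : ℝ)) ∧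
      ∑' s : {s : ℕ →₀ ℕ // σ s ^ q ≤ ξ},
        pFun θ s.1 * ∑ e ∈ Efin s.1,
          ∏ j ∈ s.1.support, ((s.1 j - e j + 1 : ℕ) : ℝ) ≤ C * ξ := by
  intro ξ hξ
  have hξ0 : (0 : ℝ) < ξ := lt_trans one_pos hξ
  have hσ0 : ∀ s, (0 : ℝ) < σ s := fun s => lt_trans one_pos (hσ s)
  -- pointwise bound on the subtype
  have hbound : ∀ s : {s : ℕ →₀ ℕ // σ s ^ q ≤ ξ},
      pFun θ s.1 * ∑ e ∈ Efin s.1, ∏ j ∈ s.1.support, ((s.1 j - e j + 1 : ℕ) : ℝ) ≤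
        pFun (θ + 2) s.1 * σ s.1 ^ (-q) * ξ := by
    rintro ⟨s, hs⟩
    have h1 : pFun θ s * ∑ e ∈ Efin s, ∏ j ∈ s.support, ((s j - e j + 1 : ℕ) : ℝ) ≤
        pFun (θ + 2) s := term_le θ hθ s
    have hpos : (0 : ℝ) < σ s ^ q := Real.rpow_pos_of_pos (hσ0 s) q
    have h2 : (1 : ℝ) ≤ σ s ^ (-q) * ξ := by
      rw [Real.rpow_neg (hσ0 s).le, inv_mul_eq_div, le_div_iff₀ hpos, one_mul]
      exact hs
    calc pFun θ s * ∑ e ∈ Efin s, ∏ j ∈ s.support, ((s j - e j + 1 : ℕ) : ℝ)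
        ≤ pFun (θ + 2) s * 1 := by rw [mul_one]; exact h1
      _ ≤ pFun (θ + 2) s * (σ s ^ (-q) * ξ) :=
          mul_le_mul_of_nonneg_left h2 (pFun_nonneg _ _)
      _ = pFun (θ + 2) s * σ s ^ (-q) * ξ := by ring
  have hnn : ∀ s : ℕ →₀ ℕ,
      0 ≤ pFun θ s * ∑ e ∈ Efin s, ∏ j ∈ s.support, ((s j - e j + 1 : ℕ) : ℝ) :=
    fun s => mul_nonneg (pFun_nonneg θ s) (inner_nonneg s)
  have hsum' : Summable (fun s : {s : ℕ →₀ ℕ // σ s ^ q ≤ ξ} =>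
      pFun (θ + 2) s.1 * σ s.1 ^ (-q) * ξ) := ((hsum.mul_right ξ)).subtype _
  have hS : Summable (fun s : {s : ℕ →₀ ℕ // σ s ^ q ≤ ξ} =>
      pFun θ s.1 * ∑ e ∈ Efin s.1,
        ∏ j ∈ s.1.support, ((s.1 j - e j + 1 : ℕ) : ℝ)) :=
    Summable.of_nonneg_of_le (fun s => hnn s.1) hbound hsum'
  refine ⟨hS, ?_⟩
  have hnn' : ∀ s : ℕ →₀ ℕ, 0 ≤ pFun (θ + 2) s * σ s ^ (-q) := fun s =>
    mul_nonneg (pFun_nonneg _ _) (Real.rpow_nonneg (hσ0 s).le _)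
  calc ∑' s : {s : ℕ →₀ ℕ // σ s ^ q ≤ ξ},
        pFun θ s.1 * ∑ e ∈ Efin s.1,
          ∏ j ∈ s.1.support, ((s.1 j - e j + 1 : ℕ) : ℝ)
      ≤ ∑' s : {s : ℕ →₀ ℕ // σ s ^ q ≤ ξ}, pFun (θ + 2) s.1 * σ s.1 ^ (-q) * ξ :=
        Summable.tsum_le_tsum hbound hS hsum'
    _ = (∑' s : {s : ℕ →₀ ℕ // σ s ^ q ≤ ξ}, pFun (θ + 2) s.1 * σ s.1 ^ (-q)) * ξ :=
        tsum_mul_right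
    _ ≤ (∑' s : ℕ →₀ ℕ, pFun (θ + 2) s * σ s ^ (-q)) * ξ := by
        refine mul_le_mul_of_nonneg_right ?_ hξ0.le
        exact Summable.tsum_subtype_le (fun s => pFun (θ + 2) s * σ s ^ (-q)) _ hnn' hsum
    _ ≤ C * ξ := mul_le_mul_of_nonneg_right hle hξ0.le
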